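/- (Lemma 5 / Lemma L4.) If Problem (SLQ) is open-loop solvable (an open-loop optimal control exists for every initial state x₀ ∈ ℝⁿ), then the homogeneous Problem (SLQ)⁰ is also open-loop solvable (for every x₀ ∈ ℝⁿ there is an admissible control minimizing J⁰(x₀,·)). -/

import Mathlib

open MeasureTheory ProbabilityTheory Matrix Finset Filter Topology

namespace SLQ

/-- Data of the discrete-time stochastic LQ problem. -/
structure Setup (Ω : Type) [MeasurableSpace Ω] (n m N : ℕ) where
  w : ℕ → Ω → ℝ
  A : ℕ → Matrix (Fin n) (Fin n) ℝ
  B : ℕ → Matrix (Fin n) (Fin m) ℝ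
  C : ℕ → Matrix (Fin n) (Fin n) ℝ
  D : ℕ → Matrix (Fin n) (Fin m) ℝ
  Q : ℕ → Matrix (Fin n) (Fin n) ℝ
  S : ℕ → Matrix (Fin m) (Fin n) ℝ
  R : ℕ → Matrix (Fin m) (Fin m) ℝ
  H : Matrix (Fin n) (Fin n) ℝ
  b : ℕ → Ω → Fin n → ℝ
  sig : ℕ → Ω → Fin n → ℝ
  q : ℕ → Ω → Fin n → ℝ
  rho : ℕ → Ω → Fin m → ℝ
  g : Ω → Fin n → ℝ

variable {Ω : Type} [MeasurableSpace Ω] {n m N : ℕ}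

/-- `Filt 𝒮 t` is the σ-algebra `𝒻_{t-1} = σ(w_0, …, w_{t-1})`; in particular
`Filt 𝒮 0` is the trivial σ-algebra `𝒻_{-1}`. -/
def Filt (𝒮 : Setup Ω n m N) (t : ℕ) : MeasurableSpace Ω :=
  ⨆ i ∈ Finset.range t, MeasurableSpace.comap (𝒮.w i) inferInstance

/-- Standing hypotheses on the data: the noises are measurable, independent, centred with
unit variance; the random coefficients are adapted and square integrable; the weighting
matrices are symmetric. -/
def Valid (𝒮 : Setup Ω n m N) (μ : Measure Ω) : Prop :=
  (∀ t, t < N → Measurable (𝒮.w t)) ∧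
  iIndepFun (fun i : Fin N => 𝒮.w i) μ ∧
  (∀ t, t < N → ∫ ω, 𝒮.w t ω ∂μ = 0) ∧
  (∀ t, t < N → ∫ ω, (𝒮.w t ω) ^ 2 ∂μ = 1) ∧
  (∀ t, t < N → Measurable[Filt 𝒮 t] (𝒮.b t) ∧ MemLp (𝒮.b t) 2 μ) ∧
  (∀ t, t < N → Measurable[Filt 𝒮 t] (𝒮.sig t) ∧ MemLp (𝒮.sig t) 2 μ) ∧
  (∀ t, t < N → Measurable[Filt 𝒮 t] (𝒮.q t) ∧ MemLp (𝒮.q t) 2 μ) ∧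
  (∀ t, t < N → Measurable[Filt 𝒮 t] (𝒮.rho t) ∧ MemLp (𝒮.rho t) 2 μ) ∧
  (Measurable[Filt 𝒮 N] 𝒮.g ∧ MemLp 𝒮.g 2 μ) ∧
  (∀ t, t < N → (𝒮.Q t).IsSymm ∧ (𝒮.R t).IsSymm) ∧ 𝒮.H.IsSymm

/-- Admissible (open-loop) controls: square integrable and `𝒻_{t-1}`-adapted. -/
def Admissible (𝒮 : Setup Ω n m N) (μ : Measure Ω) (u : ℕ → Ω → Fin m → ℝ) : Prop :=
  ∀ t, t < N → Measurable[Filt 𝒮 t] (u t) ∧ MemLp (u t) 2 μ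

/-- The state trajectory `x_0 = x₀`, `x_{t+1} = A_t x_t + B_t u_t + b_t + (C_t x_t + D_t u_t + σ_t) w_t`. -/
def traj (𝒮 : Setup Ω n m N) (x₀ : Fin n → ℝ) (u : ℕ → Ω → Fin m → ℝ) : ℕ → Ω → Fin n → ℝ
  | 0 => fun _ => x₀
  | t + 1 => fun ω =>
      (𝒮.A t).mulVec (traj 𝒮 x₀ u t ω) + (𝒮.B t).mulVec (u t ω) + 𝒮.b t ω
        + 𝒮.w t ω • ((𝒮.C t).mulVec (traj 𝒮 x₀ u t ω) + (𝒮.D t).mulVec (u t ω) + 𝒮.sig t ω)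

/-- The cost functional `J(x₀, u)`. -/
noncomputable def cost (𝒮 : Setup Ω n m N) (μ : Measure Ω) (x₀ : Fin n → ℝ)
    (u : ℕ → Ω → Fin m → ℝ) : ℝ :=
  ∫ ω, ((∑ t ∈ Finset.range N,
      (traj 𝒮 x₀ u t ω ⬝ᵥ (𝒮.Q t).mulVec (traj 𝒮 x₀ u t ω)
        + 2 * (u t ω ⬝ᵥ (𝒮.S t).mulVec (traj 𝒮 x₀ u t ω))
        + u t ω ⬝ᵥ (𝒮.R t).mulVec (u t ω)
        + 2 * (traj 𝒮 x₀ u t ω ⬝ᵥ 𝒮.q t ω)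
        + 2 * (u t ω ⬝ᵥ 𝒮.rho t ω)))
    + traj 𝒮 x₀ u N ω ⬝ᵥ 𝒮.H.mulVec (traj 𝒮 x₀ u N ω)
    + 2 * (traj 𝒮 x₀ u N ω ⬝ᵥ 𝒮.g ω)) ∂μ

/-- `u` is an open-loop optimal control at the initial state `x₀`. -/
def OpenLoopOptimal (𝒮 : Setup Ω n m N) (μ : Measure Ω) (x₀ : Fin n → ℝ)
    (u : ℕ → Ω → Fin m → ℝ) : Prop :=
  Admissible 𝒮 μ u ∧ ∀ u', Admissible 𝒮 μ u' → cost 𝒮 μ x₀ u ≤ cost 𝒮 μ x₀ u'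

/-- The homogeneous problem: all the random coefficients `b, σ, q, ρ, g` are set to zero. -/
def homog (𝒮 : Setup Ω n m N) : Setup Ω n m N :=
  { 𝒮 with b := fun _ _ => 0, sig := fun _ _ => 0, q := fun _ _ => 0,
           rho := fun _ _ => 0, g := fun _ => 0 }

/-- The closed-loop state under a feedback pair `(K, v)`. -/
def cltraj (𝒮 : Setup Ω n m N) (K : ℕ → Matrix (Fin m) (Fin n) ℝ)
    (v : ℕ → Ω → Fin m → ℝ) (x₀ : Fin n → ℝ) : ℕ → Ω → Fin n → ℝ
  | 0 => fun _ => x₀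
  | t + 1 => fun ω =>
      (𝒮.A t + 𝒮.B t * K t).mulVec (cltraj 𝒮 K v x₀ t ω) + (𝒮.B t).mulVec (v t ω) + 𝒮.b t ω
        + 𝒮.w t ω • ((𝒮.C t + 𝒮.D t * K t).mulVec (cltraj 𝒮 K v x₀ t ω)
            + (𝒮.D t).mulVec (v t ω) + 𝒮.sig t ω)

/-- The outcome control `u_t = K_t x_t + v_t` of a feedback pair `(K, v)` at `x₀`. -/
def outcome (𝒮 : Setup Ω n m N) (K : ℕ → Matrix (Fin m) (Fin n) ℝ)
    (v : ℕ → Ω → Fin m → ℝ) (x₀ : Fin n → ℝ) : ℕ → Ω → Fin m → ℝ :=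
  fun t ω => (K t).mulVec (cltraj 𝒮 K v x₀ t ω) + v t ω

/-- A closed-loop strategy: deterministic gains `K_t` and adapted square-integrable `v_t`. -/
def ClosedLoopStrategy (𝒮 : Setup Ω n m N) (μ : Measure Ω)
    (_K : ℕ → Matrix (Fin m) (Fin n) ℝ) (v : ℕ → Ω → Fin m → ℝ) : Prop :=
  ∀ t, t < N → Measurable[Filt 𝒮 t] (v t) ∧ MemLp (v t) 2 μ

/-- `(K, v)` is a closed-loop optimal strategy. -/
def ClosedLoopOptimal (𝒮 : Setup Ω n m N) (μ : Measure Ω)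
    (K : ℕ → Matrix (Fin m) (Fin n) ℝ) (v : ℕ → Ω → Fin m → ℝ) : Prop :=
  ClosedLoopStrategy 𝒮 μ K v ∧
  ∀ x₀ u, Admissible 𝒮 μ u → cost 𝒮 μ x₀ (outcome 𝒮 K v x₀) ≤ cost 𝒮 μ x₀ u

/-- `R̂_t = R_t + B_tᵀ P_{t+1} B_t + D_tᵀ P_{t+1} D_t`. -/
def Rhat (𝒮 : Setup Ω n m N) (P : ℕ → Matrix (Fin n) (Fin n) ℝ) (t : ℕ) :
    Matrix (Fin m) (Fin m) ℝ :=
  𝒮.R t + (𝒮.B t)ᵀ * P (t + 1) * 𝒮.B t + (𝒮.D t)ᵀ * P (t + 1) * 𝒮.D t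

/-!
Along a line `u + c • w` of admissible controls the cost is a quadratic polynomial in `c`,
`J(x₀, u + c w) = J(x₀, u) + 2 c G(x₀, u; w) + c² J⁰(0, w)`, because the state is affine in
`(x₀, u)` with linear part the homogeneous state. At an optimal `u` the linear coefficient
`G(x₀, u; w)` vanishes and `J⁰(0, w) ≥ 0`. If `u` and `u₀` are optimal for (SLQ) at `x₀` and at `0`,
then the cross term of `J⁰` at `(x₀, u - u₀)` is `G(x₀, u; w) - G(0, u₀; w) = 0`, so
`J⁰(x₀, u - u₀ + w) = J⁰(x₀, u - u₀) + J⁰(0, w) ≥ J⁰(x₀, u - u₀)`.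
-/

end SLQ

theorem eq_zero_and_nonneg_of_forall_mul_add_sq_mul_nonneg {a b : ℝ}
    (h : ∀ c : ℝ, 0 ≤ c * b + c ^ 2 * a) : b = 0 ∧ 0 ≤ a := by
  have ha : 0 ≤ a := by nlinarith [h 1, h (-1)]
  refine ⟨?_, ha⟩
  -- at `c = -b / (a + 1)` the quadratic equals `-(b / (a + 1)) ^ 2`
  have hc := h (-b / (a + 1))
  have ha1 : 0 < a + 1 := by linarith
  field_simp at hc
  nlinarith [sq_nonneg b]

theorem Matrix.IsSymm.dotProduct_mulVec_comm {ι α : Type*} [Fintype ι] [CommSemiring α]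
    {M : Matrix ι ι α}
    (hM : M.IsSymm) (x y : ι → α) : x ⬝ᵥ M *ᵥ y = y ⬝ᵥ M *ᵥ x := by
  rw [dotProduct_mulVec, ← mulVec_transpose, hM.eq, dotProduct_comm]

theorem Measurable.mulVec {Ω ι κ : Type*} [Fintype ι] [Fintype κ] {mΩ : MeasurableSpace Ω}
    {f : Ω → κ → ℝ} (hf : Measurable f) (M : Matrix ι κ ℝ) : Measurable fun ω => M *ᵥ f ω :=
  (Matrix.mulVecLin M).continuous_of_finiteDimensional.measurable.comp hf

namespace MeasureTheory

variable {Ω : Type*} [MeasurableSpace Ω] {μ : Measure Ω} {ι κ : Type*} [Fintype ι] [Fintype κ]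

theorem MemLp.mulVec {p : ENNReal} {f : Ω → κ → ℝ} (hf : MemLp f p μ) (M : Matrix ι κ ℝ) :
    MemLp (fun ω => M *ᵥ f ω) p μ :=
  (LinearMap.toContinuousLinearMap (Matrix.mulVecLin M)).comp_memLp' hf

theorem MemLp.integrable_dotProduct {f g : Ω → ι → ℝ} (hf : MemLp f 2 μ) (hg : MemLp g 2 μ) :
    Integrable (fun ω => f ω ⬝ᵥ g ω) μ :=
  integrable_finsetSum _ fun i _ => (hf.eval i).integrable_mul (hg.eval i)

end MeasureTheory

theorem ProbabilityTheory.IndepFun.memLp_two_mul {Ω : Type*} [MeasurableSpace Ω]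
    {μ : Measure Ω} {X Y : Ω → ℝ} (hXY : IndepFun X Y μ) (hX : MemLp X 2 μ) (hY : MemLp Y 2 μ) :
    MemLp (X * Y) 2 μ := by
  rw [memLp_two_iff_integrable_sq (hX.1.mul hY.1)]
  have hsq := (hXY.comp (measurable_id.pow_const 2) (measurable_id.pow_const 2)).integrable_mul
    hX.integrable_sq hY.integrable_sq
  convert hsq using 1
  ext ω
  simp [mul_pow]

namespace SLQ

variable {Ω : Type} [MeasurableSpace Ω] {n m N : ℕ} {μ : Measure Ω} (𝒮 : Setup Ω n m N)

theorem Filt_mono {s t : ℕ} (hst : s ≤ t) : Filt 𝒮 s ≤ Filt 𝒮 t :=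
  biSup_mono fun _ hi => Finset.mem_range.2 ((Finset.mem_range.1 hi).trans_le hst)

theorem measurable_w_Filt_succ (t : ℕ) : Measurable[Filt 𝒮 (t + 1)] (𝒮.w t) :=
  Measurable.of_comap_le <| le_iSup₂ (f := fun i (_ : i ∈ Finset.range (t + 1)) =>
    MeasurableSpace.comap (𝒮.w i) inferInstance) t (Finset.self_mem_range_succ t)

variable {𝒮}

theorem indepFun_w_of_measurable_Filt (hval : Valid 𝒮 μ) {t : ℕ} (ht : t < N) {Y : Ω → ℝ}
    (hY : Measurable[Filt 𝒮 t] Y) : IndepFun (𝒮.w t) Y μ := by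
  obtain ⟨hw, hind, -⟩ := hval
  let σw : Fin N → MeasurableSpace Ω := fun i => MeasurableSpace.comap (𝒮.w i) inferInstance
  let past : Set (Fin N) := {i | (i : ℕ) < t}
  have hpast := indep_biSup_compl (s := σw) (fun i => (hw i i.isLt).comap_le) hind.iIndep past
  have hFilt : Filt 𝒮 t ≤ ⨆ i ∈ past, σw i :=
    iSup₂_le fun i hi => le_iSup₂ (f := fun i (_ : i ∈ past) => σw i)
      ⟨i, (Finset.mem_range.1 hi).trans ht⟩ (Finset.mem_range.1 hi)
  have hnow : σw ⟨t, ht⟩ ≤ ⨆ i ∈ pastᶜ, σw i :=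
    le_iSup₂ (f := fun i (_ : i ∈ pastᶜ) => σw i) ⟨t, ht⟩ (by simp [past])
  have hFilt_w : Indep (Filt 𝒮 t) (σw ⟨t, ht⟩) μ :=
    indep_of_indep_of_le_right (indep_of_indep_of_le_left hpast hFilt) hnow
  exact (IndepFun_iff_Indep _ _ _).2 (indep_of_indep_of_le_right hFilt_w.symm hY.comap_le)

theorem memLp_w (hval : Valid 𝒮 μ) {t : ℕ} (ht : t < N) : MemLp (𝒮.w t) 2 μ := by
  obtain ⟨hw, -, -, hw2, -⟩ := hval
  refine (memLp_two_iff_integrable_sq (hw t ht).aestronglyMeasurable).2 ?_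
  -- a non-integrable function has Bochner integral `0`, not `1`
  by_contra h
  simpa [integral_undef h] using hw2 t ht

theorem memLp_w_smul (hval : Valid 𝒮 μ) {t k : ℕ} (ht : t < N) {Y : Ω → Fin k → ℝ}
    (hYm : Measurable[Filt 𝒮 t] Y) (hY : MemLp Y 2 μ) :
    MemLp (fun ω => 𝒮.w t ω • Y ω) 2 μ :=
  memLp_pi_iff.2 fun i => (indepFun_w_of_measurable_Filt hval ht
    ((measurable_pi_apply i).comp hYm)).memLp_two_mul (memLp_w hval ht) (hY.eval i)

theorem Valid.homog (hval : Valid 𝒮 μ) : Valid (homog 𝒮) μ := by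
  obtain ⟨hw, hind, hw1, hw2, -, -, -, -, -, hQR, hH⟩ := hval
  have hzero {k : ℕ} (t : ℕ) : Measurable[Filt 𝒮 t] (fun _ : Ω => (0 : Fin k → ℝ)) ∧
      MemLp (fun _ : Ω => (0 : Fin k → ℝ)) 2 μ := ⟨measurable_const, MemLp.zero⟩
  exact ⟨hw, hind, hw1, hw2, fun t _ => hzero t, fun t _ => hzero t, fun t _ => hzero t,
    fun t _ => hzero t, hzero N, hQR, hH⟩

theorem Admissible.add {u v : ℕ → Ω → Fin m → ℝ} (hu : Admissible 𝒮 μ u)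
    (hv : Admissible 𝒮 μ v) : Admissible 𝒮 μ (u + v) :=
  fun t ht => ⟨(hu t ht).1.add (hv t ht).1, (hu t ht).2.add (hv t ht).2⟩

theorem Admissible.sub {u v : ℕ → Ω → Fin m → ℝ} (hu : Admissible 𝒮 μ u)
    (hv : Admissible 𝒮 μ v) : Admissible 𝒮 μ (u - v) :=
  fun t ht => ⟨(hu t ht).1.sub (hv t ht).1, (hu t ht).2.sub (hv t ht).2⟩

theorem Admissible.const_smul {u : ℕ → Ω → Fin m → ℝ} (hu : Admissible 𝒮 μ u) (c : ℝ) :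
    Admissible 𝒮 μ (c • u) :=
  fun t ht => ⟨(hu t ht).1.const_smul c, (hu t ht).2.const_smul c⟩

variable (𝒮)

theorem traj_add (x₁ x₂ : Fin n → ℝ) (u₁ u₂ : ℕ → Ω → Fin m → ℝ) (t : ℕ) :
    traj 𝒮 (x₁ + x₂) (u₁ + u₂) t = traj 𝒮 x₁ u₁ t + traj (homog 𝒮) x₂ u₂ t := by
  induction t with
  | zero => rfl
  | succ t ih =>
    ext1 ω
    simp only [traj, ih]
    simp only [homog, Pi.add_apply, mulVec_add, add_zero, smul_add]
    abel

theorem traj_homog_smul (c : ℝ) (x : Fin n → ℝ) (u : ℕ → Ω → Fin m → ℝ) (t : ℕ) :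
    traj (homog 𝒮) (c • x) (c • u) t = c • traj (homog 𝒮) x u t := by
  induction t with
  | zero => rfl
  | succ t ih =>
    ext1 ω
    simp only [traj, ih]
    simp only [homog, Pi.smul_apply, mulVec_smul, add_zero, smul_add, smul_comm c]

variable {𝒮}

theorem traj_measurable_memLp [IsFiniteMeasure μ] (hval : Valid 𝒮 μ) {u : ℕ → Ω → Fin m → ℝ}
    (hu : Admissible 𝒮 μ u) (x₀ : Fin n → ℝ) {t : ℕ} (ht : t ≤ N) :
    Measurable[Filt 𝒮 t] (traj 𝒮 x₀ u t) ∧ MemLp (traj 𝒮 x₀ u t) 2 μ := by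
  have ⟨_, _, _, _, hb, hσ, _⟩ := hval
  induction t with
  | zero => exact ⟨measurable_const, memLp_const x₀⟩
  | succ t ih =>
    have ht : t < N := ht
    obtain ⟨hxm, hx⟩ := ih ht.le
    obtain ⟨hum, hu⟩ := hu t ht
    obtain ⟨hbm, hb⟩ := hb t ht
    obtain ⟨hsm, hs⟩ := hσ t ht
    have hYm : Measurable[Filt 𝒮 t] fun ω =>
        𝒮.C t *ᵥ traj 𝒮 x₀ u t ω + 𝒮.D t *ᵥ u t ω + 𝒮.sig t ω :=
      ((hxm.mulVec (𝒮.C t)).add (hum.mulVec (𝒮.D t))).add hsm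
    have hY : MemLp (fun ω => 𝒮.C t *ᵥ traj 𝒮 x₀ u t ω + 𝒮.D t *ᵥ u t ω + 𝒮.sig t ω) 2 μ :=
      ((hx.mulVec (𝒮.C t)).add (hu.mulVec (𝒮.D t))).add hs
    have hle := Filt_mono 𝒮 t.le_succ
    rw [traj]
    refine ⟨?_, (((hx.mulVec (𝒮.A t)).add (hu.mulVec (𝒮.B t))).add hb).add
      (memLp_w_smul hval ht hYm hY)⟩
    exact ((((hxm.mono hle le_rfl).mulVec (𝒮.A t)).add ((hum.mono hle le_rfl).mulVec (𝒮.B t))).add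
      (hbm.mono hle le_rfl)).add ((measurable_w_Filt_succ 𝒮 t).smul (hYm.mono hle le_rfl))

abbrev Path (n m : ℕ) := (ℕ → Fin n → ℝ) × (ℕ → Fin m → ℝ)

def path (𝒮 : Setup Ω n m N) (x₀ : Fin n → ℝ) (u : ℕ → Ω → Fin m → ℝ) (ω : Ω) : Path n m :=
  (fun t => traj 𝒮 x₀ u t ω, fun t => u t ω)

variable (𝒮)

theorem path_add (x₁ x₂ : Fin n → ℝ) (u₁ u₂ : ℕ → Ω → Fin m → ℝ) (ω : Ω) :
    path 𝒮 (x₁ + x₂) (u₁ + u₂) ω = path 𝒮 x₁ u₁ ω + path (homog 𝒮) x₂ u₂ ω :=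
  Prod.ext (funext fun t => congrFun (traj_add 𝒮 x₁ x₂ u₁ u₂ t) ω) rfl

theorem path_homog_smul (c : ℝ) (x : Fin n → ℝ) (u : ℕ → Ω → Fin m → ℝ) (ω : Ω) :
    path (homog 𝒮) (c • x) (c • u) ω = c • path (homog 𝒮) x u ω :=
  Prod.ext (funext fun t => congrFun (traj_homog_smul 𝒮 c x u t) ω) rfl

def costBilin : LinearMap.BilinForm ℝ (Path n m) :=
  LinearMap.mk₂ ℝ (fun p p' => ∑ t ∈ Finset.range N,
      (p.1 t ⬝ᵥ 𝒮.Q t *ᵥ p'.1 t + p.2 t ⬝ᵥ 𝒮.S t *ᵥ p'.1 t + p'.2 t ⬝ᵥ 𝒮.S t *ᵥ p.1 t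
        + p.2 t ⬝ᵥ 𝒮.R t *ᵥ p'.2 t) + p.1 N ⬝ᵥ 𝒮.H *ᵥ p'.1 N)
    (fun p₁ p₂ p' => by
      simp only [Prod.fst_add, Prod.snd_add, Pi.add_apply, add_dotProduct, mulVec_add,
        dotProduct_add, Finset.sum_add_distrib]
      ring)
    (fun c p p' => by
      simp only [Prod.smul_fst, Prod.smul_snd, Pi.smul_apply, smul_dotProduct, mulVec_smul,
        dotProduct_smul, smul_eq_mul, ← Finset.mul_sum, Finset.sum_add_distrib]
      ring)
    (fun p p₁ p₂ => by
      simp only [Prod.fst_add, Prod.snd_add, Pi.add_apply, add_dotProduct, mulVec_add,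
        dotProduct_add, Finset.sum_add_distrib]
      ring)
    (fun c p p' => by
      simp only [Prod.smul_fst, Prod.smul_snd, Pi.smul_apply, smul_dotProduct, mulVec_smul,
        dotProduct_smul, smul_eq_mul, ← Finset.mul_sum, Finset.sum_add_distrib]
      ring)

def costLinear (ω : Ω) : Path n m →ₗ[ℝ] ℝ where
  toFun p := ∑ t ∈ Finset.range N, (p.1 t ⬝ᵥ 𝒮.q t ω + p.2 t ⬝ᵥ 𝒮.rho t ω) + p.1 N ⬝ᵥ 𝒮.g ω
  map_add' p p' := by
    simp only [Prod.fst_add, Prod.snd_add, Pi.add_apply, add_dotProduct, Finset.sum_add_distrib]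
    ring
  map_smul' c p := by
    simp only [Prod.smul_fst, Prod.smul_snd, Pi.smul_apply, smul_dotProduct, smul_eq_mul,
      ← Finset.mul_sum, Finset.sum_add_distrib, RingHom.id_apply]
    ring

theorem homog_homog : homog (homog 𝒮) = homog 𝒮 := rfl

theorem costBilin_homog : costBilin (homog 𝒮) = costBilin 𝒮 := rfl

theorem costLinear_homog (ω : Ω) : costLinear (homog 𝒮) ω = 0 :=
  LinearMap.ext fun p => by simp [costLinear, homog]

variable {𝒮} in
theorem costBilin_comm (hval : Valid 𝒮 μ) (p p' : Path n m) :
    costBilin 𝒮 p' p = costBilin 𝒮 p p' := by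
  obtain ⟨-, -, -, -, -, -, -, -, -, hQR, hH⟩ := hval
  simp only [costBilin, LinearMap.mk₂_apply]
  congr 1
  · refine Finset.sum_congr rfl fun t ht => ?_
    obtain ⟨hQ, hR⟩ := hQR t (Finset.mem_range.1 ht)
    rw [hQ.dotProduct_mulVec_comm, hR.dotProduct_mulVec_comm]
    ring
  · exact hH.dotProduct_mulVec_comm _ _

theorem cost_eq_integral (μ : Measure Ω) (x₀ : Fin n → ℝ) (u : ℕ → Ω → Fin m → ℝ) :
    cost 𝒮 μ x₀ u = ∫ ω, costBilin 𝒮 (path 𝒮 x₀ u ω) (path 𝒮 x₀ u ω)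
      + 2 * costLinear 𝒮 ω (path 𝒮 x₀ u ω) ∂μ := by
  refine integral_congr_ae (Filter.Eventually.of_forall fun ω => ?_)
  simp only [costBilin, costLinear, path, LinearMap.mk₂_apply, LinearMap.coe_mk, AddHom.coe_mk,
    mul_add, Finset.sum_add_distrib, ← Finset.mul_sum]
  ring

variable {𝒮}

def PathMemLp (N : ℕ) (μ : Measure Ω) (P : Ω → Path n m) : Prop :=
  (∀ t ≤ N, MemLp (fun ω => (P ω).1 t) 2 μ) ∧ ∀ t < N, MemLp (fun ω => (P ω).2 t) 2 μ

theorem pathMemLp_path [IsFiniteMeasure μ] (hval : Valid 𝒮 μ) {u : ℕ → Ω → Fin m → ℝ}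
    (hu : Admissible 𝒮 μ u) (x₀ : Fin n → ℝ) : PathMemLp N μ (path 𝒮 x₀ u) :=
  ⟨fun _ ht => (traj_measurable_memLp hval hu x₀ ht).2, fun t ht => (hu t ht).2⟩

variable (𝒮) in
theorem integrable_costBilin {P P' : Ω → Path n m} (hP : PathMemLp N μ P)
    (hP' : PathMemLp N μ P') : Integrable (fun ω => costBilin 𝒮 (P ω) (P' ω)) μ := by
  simp only [costBilin, LinearMap.mk₂_apply]
  refine (integrable_finsetSum _ fun t ht => ?_).add
    ((hP.1 N le_rfl).integrable_dotProduct ((hP'.1 N le_rfl).mulVec _))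
  have ht : t < N := Finset.mem_range.1 ht
  exact ((((hP.1 t ht.le).integrable_dotProduct ((hP'.1 t ht.le).mulVec _)).add
    ((hP.2 t ht).integrable_dotProduct ((hP'.1 t ht.le).mulVec _))).add
    ((hP'.2 t ht).integrable_dotProduct ((hP.1 t ht.le).mulVec _))).add
    ((hP.2 t ht).integrable_dotProduct ((hP'.2 t ht).mulVec _))

theorem integrable_costLinear (hval : Valid 𝒮 μ) {P : Ω → Path n m} (hP : PathMemLp N μ P) :
    Integrable (fun ω => costLinear 𝒮 ω (P ω)) μ := by
  obtain ⟨-, -, -, -, -, -, hq, hrho, hg, -⟩ := hval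
  simp only [costLinear, LinearMap.coe_mk, AddHom.coe_mk]
  refine (integrable_finsetSum _ fun t ht => ?_).add
    ((hP.1 N le_rfl).integrable_dotProduct hg.2)
  have ht : t < N := Finset.mem_range.1 ht
  exact ((hP.1 t ht.le).integrable_dotProduct (hq t ht).2).add
    ((hP.2 t ht).integrable_dotProduct (hrho t ht).2)

variable (𝒮) in
noncomputable def crossTerm (μ : Measure Ω) (x₀ : Fin n → ℝ) (u w : ℕ → Ω → Fin m → ℝ) : ℝ :=
  ∫ ω, costBilin 𝒮 (path 𝒮 x₀ u ω) (path (homog 𝒮) 0 w ω)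
    + costLinear 𝒮 ω (path (homog 𝒮) 0 w ω) ∂μ

theorem cost_add_smul [IsFiniteMeasure μ] (hval : Valid 𝒮 μ) {u w : ℕ → Ω → Fin m → ℝ}
    (hu : Admissible 𝒮 μ u) (hw : Admissible 𝒮 μ w) (x₀ : Fin n → ℝ) (c : ℝ) :
    cost 𝒮 μ x₀ (u + c • w)
      = cost 𝒮 μ x₀ u + 2 * c * crossTerm 𝒮 μ x₀ u w + c ^ 2 * cost (homog 𝒮) μ 0 w := by
  set p := path 𝒮 x₀ u
  set q := path (homog 𝒮) 0 w
  have hp : PathMemLp N μ p := pathMemLp_path hval hu x₀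
  have hq : PathMemLp N μ q := pathMemLp_path hval.homog hw 0
  have hpath : path 𝒮 x₀ (u + c • w) = p + c • q := by
    ext1 ω
    rw [Pi.add_apply, Pi.smul_apply, ← path_homog_smul, ← path_add, smul_zero, add_zero]
  have hexp : ∀ ω, costBilin 𝒮 (p ω + c • q ω) (p ω + c • q ω)
        + 2 * costLinear 𝒮 ω (p ω + c • q ω)
      = (costBilin 𝒮 (p ω) (p ω) + 2 * costLinear 𝒮 ω (p ω))
        + 2 * c * (costBilin 𝒮 (p ω) (q ω) + costLinear 𝒮 ω (q ω))
        + c ^ 2 * costBilin 𝒮 (q ω) (q ω) := by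
    intro ω
    simp only [map_add, map_smul, LinearMap.add_apply, LinearMap.smul_apply, smul_eq_mul]
    rw [costBilin_comm hval (p ω) (q ω)]
    ring
  rw [cost_eq_integral, cost_eq_integral, cost_eq_integral, costBilin_homog, crossTerm, hpath]
  simp only [costLinear_homog, LinearMap.zero_apply, mul_zero, add_zero, Pi.add_apply,
    Pi.smul_apply, hexp]
  have hpp := (integrable_costBilin 𝒮 hp hp).fun_add ((integrable_costLinear hval hp).const_mul 2)
  have hpq := (integrable_costBilin 𝒮 hp hq).fun_add (integrable_costLinear hval hq)
  rw [integral_add (hpp.fun_add (hpq.const_mul _)) ((integrable_costBilin 𝒮 hq hq).const_mul _),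
    integral_add hpp (hpq.const_mul _), integral_const_mul, integral_const_mul]

theorem crossTerm_homog_sub [IsFiniteMeasure μ] (hval : Valid 𝒮 μ)
    {u u' w : ℕ → Ω → Fin m → ℝ} (hu : Admissible 𝒮 μ u) (hu' : Admissible 𝒮 μ u')
    (hw : Admissible 𝒮 μ w) (x₀ : Fin n → ℝ) :
    crossTerm (homog 𝒮) μ x₀ (u - u') w = crossTerm 𝒮 μ x₀ u w - crossTerm 𝒮 μ 0 u' w := by
  have hpath (ω : Ω) : path (homog 𝒮) x₀ (u - u') ω = path 𝒮 x₀ u ω - path 𝒮 0 u' ω := by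
    rw [eq_sub_iff_add_eq', ← path_add, zero_add, add_sub_cancel]
  set q := path (homog 𝒮) 0 w
  have hq : PathMemLp N μ q := pathMemLp_path hval.homog hw 0
  have hcross {x : Fin n → ℝ} {v : ℕ → Ω → Fin m → ℝ} (hv : Admissible 𝒮 μ v) :=
    (integrable_costBilin 𝒮 (pathMemLp_path hval hv x) hq).fun_add (integrable_costLinear hval hq)
  rw [crossTerm, crossTerm, crossTerm, ← integral_sub (hcross hu) (hcross hu')]
  refine integral_congr_ae (Filter.Eventually.of_forall fun ω => ?_)
  simp only [hpath, costBilin_homog, homog_homog, costLinear_homog, map_sub, LinearMap.sub_apply,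
    LinearMap.zero_apply]
  ring

theorem OpenLoopOptimal.crossTerm_eq_zero_and_cost_homog_nonneg [IsFiniteMeasure μ]
    (hval : Valid 𝒮 μ) {x₀ : Fin n → ℝ} {u : ℕ → Ω → Fin m → ℝ}
    (hopt : OpenLoopOptimal 𝒮 μ x₀ u) {w : ℕ → Ω → Fin m → ℝ} (hw : Admissible 𝒮 μ w) :
    crossTerm 𝒮 μ x₀ u w = 0 ∧ 0 ≤ cost (homog 𝒮) μ 0 w := by
  have h := eq_zero_and_nonneg_of_forall_mul_add_sq_mul_nonneg (b := 2 * crossTerm 𝒮 μ x₀ u w)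
    fun c => by
      have := hopt.2 _ (hopt.1.add (hw.const_smul c))
      rw [cost_add_smul hval hopt.1 hw] at this
      linarith
  exact ⟨by linarith [h.1], h.2⟩

theorem statement_14_general
    {Ω : Type} [MeasurableSpace Ω] {n m N : ℕ}
    (𝒮 : Setup Ω n m N) (μ : Measure Ω) [IsProbabilityMeasure μ]
    (hvalid : Valid 𝒮 μ)
    (hsolv : ∀ x₀ : Fin n → ℝ, ∃ u, OpenLoopOptimal 𝒮 μ x₀ u) :
    ∀ x₀ : Fin n → ℝ, ∃ u, OpenLoopOptimal (homog 𝒮) μ x₀ u := by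
  intro x₀
  obtain ⟨u, hu⟩ := hsolv x₀
  obtain ⟨u₀, hu₀⟩ := hsolv 0
  have hadm : Admissible 𝒮 μ (u - u₀) := hu.1.sub hu₀.1
  refine ⟨u - u₀, hadm, fun v hv => ?_⟩
  have hw : Admissible 𝒮 μ (v - (u - u₀)) := Admissible.sub hv hadm
  obtain ⟨hcross, hnonneg⟩ := hu.crossTerm_eq_zero_and_cost_homog_nonneg hvalid hw
  obtain ⟨hcross₀, -⟩ := hu₀.crossTerm_eq_zero_and_cost_homog_nonneg hvalid hw
  have h := cost_add_smul hvalid.homog hadm hw x₀ 1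
  rw [one_smul, add_sub_cancel, crossTerm_homog_sub hvalid hu.1 hu₀.1 hw, hcross, hcross₀] at h
  change cost (homog 𝒮) μ x₀ (u - u₀) ≤ cost (homog 𝒮) μ x₀ v
  rw [h, homog_homog]
  linarith

/-- Lemma 5 / Lemma L4: open-loop solvability of Problem (SLQ) implies open-loop
solvability of the homogeneous Problem (SLQ)⁰. -/
theorem statement_14
    {Ω : Type} [MeasurableSpace Ω] {n m N : ℕ} (hN : 1 ≤ N)
    (𝒮 : Setup Ω n m N) (μ : Measure Ω) [IsProbabilityMeasure μ]
    (hvalid : Valid 𝒮 μ)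
    (hsolv : ∀ x₀ : Fin n → ℝ, ∃ u, OpenLoopOptimal 𝒮 μ x₀ u) :
    ∀ x₀ : Fin n → ℝ, ∃ u, OpenLoopOptimal (homog 𝒮) μ x₀ u :=
  statement_14_general 𝒮 μ hvalid hsolv

end SLQ
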